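/- arXiv:2403.02811 — 7 statements merged into one kernel-verified Lean document; each statement's English description precedes it below -/
import Mathlib

section
/- Let H and F be real Hilbert spaces, let S : H → F be a bounded linear operator, let Π be an orthogonal projection on H, and let γ > 0. Then S Π S* + γ I is invertible and ‖(S Π S* + γ I)⁻¹ S Π‖ ≤ γ^{-1/2}, where ‖·‖ denotes the operator norm. -/
/-!
Write `T = S Π`; since `Π` is an orthogonal projection, `S Π S* = T T*`, so the operator is
`A = T T* + γ I` and `⟪A x, x⟫ = ‖T* x‖² + γ ‖x‖²`. This makes `A` coercive, hence invertible,
and together with `⟪A x, x⟫ ≤ ‖A x‖ ‖x‖` and AM-GM it gives `2 √γ ‖T* x‖ ≤ ‖A x‖`. As `A⁻¹` is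
self-adjoint, `‖A⁻¹ T‖ = ‖T* A⁻¹‖ ≤ 1 / (2 √γ) ≤ γ^{-1/2}`.
-/

open ContinuousLinearMap

namespace ContinuousLinearMap

variable {H F : Type*}
  [NormedAddCommGroup H] [InnerProductSpace ℝ H] [CompleteSpace H]
  [NormedAddCommGroup F] [InnerProductSpace ℝ F] [CompleteSpace F]

theorem _root_.IsStarProjection.conj_adjoint_eq_self_comp_adjoint {P : H →L[ℝ] H}
    (hP : IsStarProjection P) (S : H →L[ℝ] F) :
    S ∘L P ∘L adjoint S = (S ∘L P) ∘L adjoint (S ∘L P) := by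
  rw [adjoint_comp, hP.isSelfAdjoint.adjoint_eq, comp_assoc, ← comp_assoc P P,
    ← mul_def, hP.isIdempotentElem.eq]

theorem inner_self_comp_adjoint_add_smul_one_apply_self (T : H →L[ℝ] F) (γ : ℝ) (x : F) :
    inner ℝ ((T ∘L adjoint T + γ • 1) x) x = ‖adjoint T x‖ ^ 2 + γ * ‖x‖ ^ 2 := by
  rw [add_apply, comp_apply, inner_add_left, ← adjoint_inner_right, real_inner_self_eq_norm_sq,
    smul_apply, one_apply_eq_self, real_inner_smul_left, real_inner_self_eq_norm_sq]

theorem isUnit_self_comp_adjoint_add_smul_one (T : H →L[ℝ] F) {γ : ℝ} (hγ : 0 < γ) :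
    IsUnit (T ∘L adjoint T + γ • 1) := by
  refine isUnit_of_forall_le_norm_inner_map _ (Real.toNNReal_pos.2 hγ) fun x => ?_
  rw [inner_self_comp_adjoint_add_smul_one_apply_self, Real.norm_eq_abs,
    Real.coe_toNNReal _ hγ.le]
  nlinarith [le_abs_self (‖adjoint T x‖ ^ 2 + γ * ‖x‖ ^ 2), sq_nonneg ‖adjoint T x‖]

theorem two_mul_sqrt_mul_norm_adjoint_apply_le (T : H →L[ℝ] F) {γ : ℝ} (hγ : 0 < γ) (x : F) :
    2 * √γ * ‖adjoint T x‖ ≤ ‖(T ∘L adjoint T + γ • 1) x‖ := by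
  set A := T ∘L adjoint T + γ • 1
  have hinner : ‖adjoint T x‖ ^ 2 + γ * ‖x‖ ^ 2 ≤ ‖A x‖ * ‖x‖ :=
    inner_self_comp_adjoint_add_smul_one_apply_self T γ x ▸ real_inner_le_norm _ _
  have hsq : (2 * √γ * ‖adjoint T x‖) ^ 2 ≤ ‖A x‖ ^ 2 := by
    rw [mul_pow, mul_pow, Real.sq_sqrt hγ.le]
    nlinarith [sq_nonneg (‖A x‖ - 2 * γ * ‖x‖)]
  exact (abs_le_of_sq_le_sq' hsq (norm_nonneg _)).2

theorem norm_ringInverse_self_comp_adjoint_add_smul_one_comp_le (T : H →L[ℝ] F) {γ : ℝ}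
    (hγ : 0 < γ) : ‖Ring.inverse (T ∘L adjoint T + γ • 1) ∘L T‖ ≤ (2 * √γ)⁻¹ := by
  set A := T ∘L adjoint T + γ • 1
  have hA_sa : IsSelfAdjoint A :=
    (isPositive_self_comp_adjoint T).isSelfAdjoint.add ((IsSelfAdjoint.all γ).smul (.one _))
  have hAinv (y : F) : A (Ring.inverse A y) = y :=
    DFunLike.congr_fun (Ring.mul_inverse_cancel A (isUnit_self_comp_adjoint_add_smul_one T hγ)) y
  rw [← LinearIsometryEquiv.norm_map adjoint, adjoint_comp, hA_sa.ringInverse.adjoint_eq]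
  refine opNorm_le_bound _ (by positivity) fun y => ?_
  have hbound := two_mul_sqrt_mul_norm_adjoint_apply_le T hγ (Ring.inverse A y)
  rw [hAinv] at hbound
  rw [comp_apply, inv_mul_eq_div, le_div_iff₀ (by positivity), mul_comm]
  exact hbound

end ContinuousLinearMap

/-- `S Π S* + γ I` is invertible and `‖(S Π S* + γ I)⁻¹ S Π‖ ≤ γ^{-1/2}`. -/
theorem stmt_1
    {H F : Type*}
    [NormedAddCommGroup H] [InnerProductSpace ℝ H] [CompleteSpace H]
    [NormedAddCommGroup F] [InnerProductSpace ℝ F] [CompleteSpace F]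
    (S : H →L[ℝ] F)
    (P : H →L[ℝ] H) (hP_idem : P ∘L P = P) (hP_sa : IsSelfAdjoint P)
    (γ : ℝ) (hγ : 0 < γ) :
    IsUnit (S ∘L P ∘L adjoint S + γ • (1 : F →L[ℝ] F)) ∧
    ‖Ring.inverse (S ∘L P ∘L adjoint S + γ • (1 : F →L[ℝ] F)) ∘L S ∘L P‖ ≤
      γ ^ (-(1 : ℝ) / 2) := by
  rw [IsStarProjection.conj_adjoint_eq_self_comp_adjoint ⟨hP_idem, hP_sa⟩ S]
  refine ⟨isUnit_self_comp_adjoint_add_smul_one _ hγ,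
    (norm_ringInverse_self_comp_adjoint_add_smul_one_comp_le _ hγ).trans ?_⟩
  have hsqrt : 0 < √γ := Real.sqrt_pos.2 hγ
  rw [neg_div, Real.rpow_neg hγ.le, ← Real.sqrt_eq_rpow]
  exact inv_anti₀ hsqrt (by linarith)
end

section
/- Let H₁ be a real Hilbert space and E = ℝ^{n_u}. Let A : H₁ → H₁ and B : E → H₁ be bounded linear operators, let R : E → E be self-adjoint positive definite, let Q : H₁ → H₁ be bounded self-adjoint, and set N := B R⁻¹ B*. Let P and X be bounded self-adjoint operators on H₁ with P positive semidefinite, and suppose I + N P and I + N(P + X) are invertible. Define F(M) := M − A* M (I + N M)⁻¹ A − Q for M ∈ {P, P+X}, K := −(R + B* P B)⁻¹ B* P A, and L := A + B K. If F(P) = 0, then F(P + X) = X − L* X L + L* X (I + N(P + X))⁻¹ N X L. -/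
/-!
By the Woodbury identity the optimal gain gives `L = (1 + N P)⁻¹ A`. Subtracting `F(P) = 0` from
`F(P + X)` eliminates `Q` and leaves `X + A* (P (1 + N P)⁻¹ - (P + X) (1 + N (P + X))⁻¹) A`; the
bracket is evaluated with the resolvent identity and the push-through identity
`(1 + P N)⁻¹ P = P (1 + N P)⁻¹`, and `(1 + P N)⁻¹ = ((1 + N P)⁻¹)*` supplies the factor `L*`.
Apart from the invertibility of `R` and `R + B* P B` (positive definite in finite dimension), the
whole computation is algebra in a star ring.
-/

open ContinuousLinearMap
open scoped RealInnerProductSpace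

theorem ContinuousLinearMap.isUnit_of_inner_map_self_pos {E : Type*} [NormedAddCommGroup E]
    [InnerProductSpace ℝ E] [FiniteDimensional ℝ E] (T : E →L[ℝ] E)
    (hT : ∀ u, u ≠ 0 → 0 < ⟪T u, u⟫) : IsUnit T := by
  rw [isUnit_iff_isUnit_toLinearMap, LinearMap.isUnit_iff_ker_eq_bot, LinearMap.ker_eq_bot']
  intro u hu
  by_contra hu0
  simpa [show T u = 0 from hu] using hT u hu0

section Woodbury

variable {𝕜 E F : Type*} [Ring 𝕜] [TopologicalSpace E] [AddCommGroup E] [IsTopologicalAddGroup E]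
  [Module 𝕜 E] [TopologicalSpace F] [AddCommGroup F] [IsTopologicalAddGroup F] [Module 𝕜 F]

/-- One half of the Woodbury identity `(1 + B R⁻¹ C)⁻¹ = 1 - B (R + C B)⁻¹ C`. -/
theorem ContinuousLinearMap.one_add_comp_inverse_comp_mul_one_sub {B : E →L[𝕜] F}
    {R : E →L[𝕜] E} {C : F →L[𝕜] E} (hR : IsUnit R) (hG : IsUnit (R + C ∘L B)) :
    (1 + B ∘L Ring.inverse R ∘L C) * (1 - B ∘L Ring.inverse (R + C ∘L B) ∘L C) = 1 := by
  set g := Ring.inverse (R + C ∘L B)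
  have key : Ring.inverse R ∘L C ∘L B ∘L g = Ring.inverse R - g := by
    calc Ring.inverse R ∘L C ∘L B ∘L g
        = Ring.inverse R * ((R + C ∘L B) * g) - Ring.inverse R * R * g := by
          simp only [mul_add, add_mul, mul_def, comp_assoc]; abel
      _ = Ring.inverse R - g := by
          rw [Ring.mul_inverse_cancel _ hG, Ring.inverse_mul_cancel _ hR, mul_one, one_mul]
  calc (1 + B ∘L Ring.inverse R ∘L C) * (1 - B ∘L g ∘L C)
      = 1 + B ∘L (Ring.inverse R - g - Ring.inverse R ∘L C ∘L B ∘L g) ∘L C := by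
        simp only [mul_def, comp_sub, sub_comp, add_comp, one_def, id_comp, comp_id, comp_assoc]
        abel
    _ = 1 := by rw [key, sub_self, zero_comp, comp_zero, add_zero]

end Woodbury

section Riccati

variable {α : Type*} [Ring α]

theorem mul_sub_mul_eq_of_inverses {N P X e f s : α} (he : (1 + N * P) * e = 1)
    (hf : f * (1 + P * N) = 1) (hs : s * (1 + N * (P + X)) = 1)
    (hs' : (1 + N * (P + X)) * s = 1) :
    P * e - (P + X) * s = f * X * s * N * X * e - f * X * e := by
  have hfP : f * P = P * e := by
    calc f * P = f * (P * (1 + N * P)) * e := by rw [mul_assoc, mul_assoc, he, mul_one]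
      _ = f * (1 + P * N) * P * e := by noncomm_ring
      _ = P * e := by rw [hf, one_mul]
  have hfXs : f * X * s = (P + X) * s - P * e := by
    calc f * X * s = f * ((1 + P * N) * (P + X) - P * (1 + N * (P + X))) * s := by noncomm_ring
      _ = f * (1 + P * N) * ((P + X) * s) - f * P * ((1 + N * (P + X)) * s) := by noncomm_ring
      _ = (P + X) * s - P * e := by rw [hf, hs', hfP, one_mul, mul_one]
  have hsNXe : s * N * X * e = e - s := by
    calc s * N * X * e = s * (1 + N * (P + X)) * e - s * ((1 + N * P) * e) := by noncomm_ring
      _ = e - s := by rw [hs, he, one_mul, mul_one]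
  calc P * e - (P + X) * s = -(f * X * s) := by rw [hfXs]; abel
    _ = f * X * (s * N * X * e) - f * X * e := by rw [hsNXe]; noncomm_ring
    _ = f * X * s * N * X * e - f * X * e := by simp only [mul_assoc]

noncomputable def riccatiMap [Star α] (A N Q M : α) : α :=
  M - star A * M * Ring.inverse (1 + N * M) * A - Q

theorem riccatiMap_add_eq_of_riccatiMap_eq_zero [StarRing α] {A N Q P X L : α}
    (hN : IsSelfAdjoint N) (hP : IsSelfAdjoint P) (h1 : IsUnit (1 + N * P))
    (h2 : IsUnit (1 + N * (P + X))) (hL : (1 + N * P) * L = A) (hP0 : riccatiMap A N Q P = 0) :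
    riccatiMap A N Q (P + X) =
      X - star L * X * L + star L * X * Ring.inverse (1 + N * (P + X)) * N * X * L := by
  have hLe : L = Ring.inverse (1 + N * P) * A := by rw [← hL, Ring.inverse_mul_cancel_left _ _ h1]
  have hf : star (Ring.inverse (1 + N * P)) * (1 + P * N) = 1 := by
    rw [show 1 + P * N = star (1 + N * P) by simp [hN.star_eq, hP.star_eq], ← star_mul,
      Ring.mul_inverse_cancel _ h1, star_one]
  have hres := mul_sub_mul_eq_of_inverses (Ring.mul_inverse_cancel _ h1) hf
    (Ring.inverse_mul_cancel _ h2) (Ring.mul_inverse_cancel _ h2)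
  rw [← sub_zero (riccatiMap A N Q (P + X)), ← hP0, hLe]
  simp only [riccatiMap]
  generalize Ring.inverse (1 + N * P) = e at hres ⊢
  generalize Ring.inverse (1 + N * (P + X)) = s at hres ⊢
  calc P + X - star A * (P + X) * s * A - Q - (P - star A * P * e * A - Q)
      = X + star A * (P * e - (P + X) * s) * A := by noncomm_ring
    _ = _ := by rw [hres, star_mul]; noncomm_ring

end Riccati

theorem stmt_3_general
    {H₁ : Type*} [NormedAddCommGroup H₁] [InnerProductSpace ℝ H₁] [CompleteSpace H₁]
    {n : ℕ}
    (A : H₁ →L[ℝ] H₁) (B : EuclideanSpace ℝ (Fin n) →L[ℝ] H₁)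
    (R : EuclideanSpace ℝ (Fin n) →L[ℝ] EuclideanSpace ℝ (Fin n))
    (hR_sa : IsSelfAdjoint R) (hR_pos : ∀ u, u ≠ 0 → 0 < ⟪R u, u⟫)
    (Q : H₁ →L[ℝ] H₁)
    (N : H₁ →L[ℝ] H₁) (hN : N = B ∘L Ring.inverse R ∘L adjoint B)
    (P X : H₁ →L[ℝ] H₁)
    (hP_sa : IsSelfAdjoint P)
    (hP_pos : ∀ x, 0 ≤ ⟪P x, x⟫)
    (h1 : IsUnit ((1 : H₁ →L[ℝ] H₁) + N ∘L P))
    (h2 : IsUnit ((1 : H₁ →L[ℝ] H₁) + N ∘L (P + X)))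
    (Fric : (H₁ →L[ℝ] H₁) → (H₁ →L[ℝ] H₁))
    (hF : ∀ M, Fric M =
      M - adjoint A ∘L M ∘L Ring.inverse ((1 : H₁ →L[ℝ] H₁) + N ∘L M) ∘L A - Q)
    (K : H₁ →L[ℝ] EuclideanSpace ℝ (Fin n))
    (hK : K = -(Ring.inverse (R + adjoint B ∘L P ∘L B) ∘L adjoint B ∘L P ∘L A))
    (L : H₁ →L[ℝ] H₁) (hL : L = A + B ∘L K)
    (hP0 : Fric P = 0) :
    Fric (P + X) = X - adjoint L ∘L X ∘L L
      + adjoint L ∘L X ∘L Ring.inverse ((1 : H₁ →L[ℝ] H₁) + N ∘L (P + X)) ∘L N ∘L X ∘L L := by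
  have hR : IsUnit R := R.isUnit_of_inner_map_self_pos hR_pos
  have hG : IsUnit (R + (adjoint B ∘L P) ∘L B) := by
    refine isUnit_of_inner_map_self_pos _ fun u hu => ?_
    have := hR_pos u hu
    have := hP_pos (B u)
    simp only [add_apply, comp_apply, inner_add_left, adjoint_inner_left]
    linarith
  have hLA : (1 + N * P) * L = A := by
    calc (1 + N * P) * L
        = (1 + B ∘L Ring.inverse R ∘L (adjoint B ∘L P)) *
            (1 - B ∘L Ring.inverse (R + (adjoint B ∘L P) ∘L B) ∘L (adjoint B ∘L P)) * A := by
          rw [hL, hK, hN]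
          simp only [mul_def, one_def, sub_eq_add_neg, add_comp, neg_comp, id_comp, comp_neg,
            comp_assoc]
      _ = A := by rw [one_add_comp_inverse_comp_mul_one_sub hR hG, one_mul]
  have hFric : ∀ M, Fric M = riccatiMap A N Q M := fun M => by
    simp only [hF, riccatiMap, mul_def, star_eq_adjoint, comp_assoc]
  rw [hFric] at hP0 ⊢
  simpa only [mul_def, star_eq_adjoint, comp_assoc] using
    riccatiMap_add_eq_of_riccatiMap_eq_zero (hN ▸ hR_sa.ringInverse.conj_adjoint B) hP_sa h1 h2
      hLA hP0

/-- Decomposition of the perturbed discrete algebraic Riccati map: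
`F(P+X) = X - L* X L + L* X (I + N(P+X))⁻¹ N X L` when `F(P) = 0`. -/
theorem stmt_3
    {H₁ : Type*} [NormedAddCommGroup H₁] [InnerProductSpace ℝ H₁] [CompleteSpace H₁]
    {n : ℕ}
    (A : H₁ →L[ℝ] H₁) (B : EuclideanSpace ℝ (Fin n) →L[ℝ] H₁)
    (R : EuclideanSpace ℝ (Fin n) →L[ℝ] EuclideanSpace ℝ (Fin n))
    (hR_sa : IsSelfAdjoint R) (hR_pos : ∀ u, u ≠ 0 → 0 < ⟪R u, u⟫)
    (Q : H₁ →L[ℝ] H₁) (hQ_sa : IsSelfAdjoint Q)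
    (N : H₁ →L[ℝ] H₁) (hN : N = B ∘L Ring.inverse R ∘L adjoint B)
    (P X : H₁ →L[ℝ] H₁)
    (hP_sa : IsSelfAdjoint P) (hX_sa : IsSelfAdjoint X)
    (hP_pos : ∀ x, 0 ≤ ⟪P x, x⟫)
    (h1 : IsUnit ((1 : H₁ →L[ℝ] H₁) + N ∘L P))
    (h2 : IsUnit ((1 : H₁ →L[ℝ] H₁) + N ∘L (P + X)))
    (Fric : (H₁ →L[ℝ] H₁) → (H₁ →L[ℝ] H₁))
    (hF : ∀ M, Fric M =
      M - adjoint A ∘L M ∘L Ring.inverse ((1 : H₁ →L[ℝ] H₁) + N ∘L M) ∘L A - Q)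
    (K : H₁ →L[ℝ] EuclideanSpace ℝ (Fin n))
    (hK : K = -(Ring.inverse (R + adjoint B ∘L P ∘L B) ∘L adjoint B ∘L P ∘L A))
    (L : H₁ →L[ℝ] H₁) (hL : L = A + B ∘L K)
    (hP0 : Fric P = 0) :
    Fric (P + X) = X - adjoint L ∘L X ∘L L
      + adjoint L ∘L X ∘L Ring.inverse ((1 : H₁ →L[ℝ] H₁) + N ∘L (P + X)) ∘L N ∘L X ∘L L :=
  stmt_3_general A B R hR_sa hR_pos Q N hN P X hP_sa hP_pos h1 h2 Fric hF K hK L hL hP0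
end

section
/- Let H be a real Hilbert space and let N, M : H → H be bounded self-adjoint positive semidefinite operators such that I + M N is invertible. Then ‖N (I + M N)⁻¹‖ ≤ ‖N‖, where ‖·‖ denotes the operator norm. -/
/-!
If `T` is a right inverse of `1 + M N`, then taking adjoints gives `T⋆ (1 + N M) = 1`, and
inserting this identity in front of `N T` and of `N - N T = N M N T` yields the congruences
`N T = T⋆ (N + N M N) T` and `N - N T = T⋆ (N M N + (M N)⋆ N (M N)) T`.
Both middle factors are positive, so `0 ≤ N T ≤ N` in the Loewner order. For a positive operator
the norm is the supremum of its Rayleigh quotient, which is monotone in the operator; hence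
`‖N T‖ ≤ ‖N‖`.
-/

open ContinuousLinearMap
open scoped RealInnerProductSpace

namespace ContinuousLinearMap

variable {𝕜 E : Type*} [RCLike 𝕜] [NormedAddCommGroup E] [InnerProductSpace 𝕜 E]

theorem norm_le_norm_of_nonneg_of_le {A B : E →L[𝕜] E} (hA : 0 ≤ A) (hAB : A ≤ B) :
    ‖A‖ ≤ ‖B‖ := by
  rw [nonneg_iff_isPositive] at hA
  rw [le_def] at hAB
  rw [A.norm_eq_iSup_rayleighQuotient hA.isSymmetric]
  refine ciSup_le fun x => ?_
  have hA_nonneg : 0 ≤ A.rayleighQuotient x := div_nonneg (hA.2 x) (sq_nonneg _)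
  have hBA_nonneg : 0 ≤ (B - A).rayleighQuotient x := div_nonneg (hAB.2 x) (sq_nonneg _)
  calc |A.rayleighQuotient x| = A.rayleighQuotient x := abs_of_nonneg hA_nonneg
    _ ≤ A.rayleighQuotient x + (B - A).rayleighQuotient x := le_add_of_nonneg_right hBA_nonneg
    _ = B.rayleighQuotient x := by rw [← rayleighQuotient_add, add_sub_cancel]
    _ ≤ ‖B‖ := (le_abs_self _).trans (B.rayleighQuotient_le_norm x)

variable [CompleteSpace E] {N M T : E →L[𝕜] E}

theorem IsPositive.star_conj {A : E →L[𝕜] E} (hA : A.IsPositive) (S : E →L[𝕜] E) :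
    (star S * A * S).IsPositive := by
  simpa only [star_eq_adjoint, mul_def, comp_assoc] using hA.adjoint_conj S

theorem star_mul_eq_one_of_mul_eq_one (hN : IsSelfAdjoint N) (hM : IsSelfAdjoint M)
    (hT : (1 + M * N) * T = 1) : star T * (1 + N * M) = 1 := by
  simpa only [star_mul, star_add, star_one, hN.star_eq, hM.star_eq] using congrArg star hT

theorem mul_eq_star_conj (hN : IsSelfAdjoint N) (hM : IsSelfAdjoint M)
    (hT : (1 + M * N) * T = 1) : N * T = star T * (N + star N * M * N) * T := by
  calc N * T = star T * (1 + N * M) * N * T := by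
        rw [star_mul_eq_one_of_mul_eq_one hN hM hT, one_mul]
    _ = _ := by rw [hN.star_eq]; noncomm_ring

theorem sub_mul_eq_star_conj (hN : IsSelfAdjoint N) (hM : IsSelfAdjoint M)
    (hT : (1 + M * N) * T = 1) :
    N - N * T = star T * (star N * M * N + star (M * N) * N * (M * N)) * T := by
  calc N - N * T = N * ((1 + M * N) * T) - N * T := by rw [hT, mul_one]
    _ = star T * (1 + N * M) * (N * M * N * T) := by
      rw [star_mul_eq_one_of_mul_eq_one hN hM hT, one_mul]; noncomm_ring
    _ = _ := by simp only [star_mul, hN.star_eq, hM.star_eq]; noncomm_ring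

theorem mul_nonneg_of_one_add_mul_mul_eq_one (hN : N.IsPositive) (hM : M.IsPositive)
    (hT : (1 + M * N) * T = 1) : 0 ≤ N * T := by
  rw [nonneg_iff_isPositive, mul_eq_star_conj hN.isSelfAdjoint hM.isSelfAdjoint hT]
  exact (hN.add (hM.star_conj N)).star_conj T

theorem mul_le_self_of_one_add_mul_mul_eq_one (hN : N.IsPositive) (hM : M.IsPositive)
    (hT : (1 + M * N) * T = 1) : N * T ≤ N := by
  rw [le_def, sub_mul_eq_star_conj hN.isSelfAdjoint hM.isSelfAdjoint hT]
  exact ((hM.star_conj N).add (hN.star_conj (M * N))).star_conj T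

theorem norm_mul_le_of_one_add_mul_mul_eq_one (hN : N.IsPositive) (hM : M.IsPositive)
    (hT : (1 + M * N) * T = 1) : ‖N * T‖ ≤ ‖N‖ :=
  norm_le_norm_of_nonneg_of_le (mul_nonneg_of_one_add_mul_mul_eq_one hN hM hT)
    (mul_le_self_of_one_add_mul_mul_eq_one hN hM hT)

end ContinuousLinearMap

/-- For positive semidefinite `N`, `M` with `I + M N` invertible, `‖N (I + M N)⁻¹‖ ≤ ‖N‖`. -/
theorem stmt_7
    {H : Type*} [NormedAddCommGroup H] [InnerProductSpace ℝ H] [CompleteSpace H]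
    (N M : H →L[ℝ] H)
    (hN_sa : IsSelfAdjoint N) (hM_sa : IsSelfAdjoint M)
    (hN_pos : ∀ x, 0 ≤ ⟪N x, x⟫) (hM_pos : ∀ x, 0 ≤ ⟪M x, x⟫)
    (h : IsUnit ((1 : H →L[ℝ] H) + M ∘L N)) :
    ‖N ∘L Ring.inverse ((1 : H →L[ℝ] H) + M ∘L N)‖ ≤ ‖N‖ :=
  norm_mul_le_of_one_add_mul_mul_eq_one ⟨hN_sa.isSymmetric, hN_pos⟩ ⟨hM_sa.isSymmetric, hM_pos⟩
    (Ring.mul_inverse_cancel _ h)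
end

section
/- Let H₁ be a real Hilbert space. Let L : H₁ → H₁ be bounded, let N : H₁ → H₁ be bounded self-adjoint positive semidefinite, let X : H₁ → H₁ be bounded self-adjoint, and let P : H₁ → H₁ be bounded self-adjoint with P + X positive semidefinite. Assume I + N(P + X) is invertible. Then ‖L* X (I + N(P + X))⁻¹ N X L‖ ≤ ‖L‖² ‖X‖² ‖N‖. -/
/-!
Write `S = P + X` and `F = (1 + N S)⁻¹ N`, so that the remainder is `L* X F X L`. Since
`(1 + N S) N = N (1 + S N) = N (1 + N S)*`, the operator `F` is self-adjoint. With `y = F x` and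
`u = x - S y` one has `N u = y`, hence
`⟪F x, x⟫ = ⟪N u, u⟫ + ⟪S y, y⟫ ≥ 0` and `⟪(N - F) x, x⟫ = ⟪S y, y⟫ + ⟪N (S y), S y⟫ ≥ 0`.
So `0 ≤ F ≤ N` in the Loewner order, which gives `‖F‖ ≤ ‖N‖` through the Rayleigh quotient
description of the norm of a self-adjoint operator.
-/

open ContinuousLinearMap
open scoped RealInnerProductSpace

theorem Ring.inverse_mul_eq_mul_inverse {M₀ : Type*} [MonoidWithZero M₀] {a b c : M₀}
    (ha : IsUnit a) (hc : IsUnit c) (h : a * b = b * c) :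
    Ring.inverse a * b = b * Ring.inverse c :=
  calc Ring.inverse a * b = Ring.inverse a * (b * c) * Ring.inverse c := by
        rw [← mul_assoc, Ring.mul_inverse_cancel_right _ _ hc]
    _ = b * Ring.inverse c := by rw [← h, Ring.inverse_mul_cancel_left _ _ ha]

theorem IsSelfAdjoint.ring_inverse_one_add_mul_mul {R : Type*} [Ring R] [StarRing R] {n s : R}
    (hn : IsSelfAdjoint n) (hs : IsSelfAdjoint s) (h : IsUnit (1 + n * s)) :
    IsSelfAdjoint (Ring.inverse (1 + n * s) * n) := by
  have hstar : star (1 + n * s) = 1 + s * n := by simp [hn.star_eq, hs.star_eq]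
  rw [isSelfAdjoint_iff, star_mul, hn.star_eq, ← Ring.inverse_star, hstar]
  exact (Ring.inverse_mul_eq_mul_inverse h (hstar ▸ h.star) (by noncomm_ring)).symm

namespace ContinuousLinearMap

theorem norm_le_norm_of_isPositive_of_le {𝕜 E : Type*} [RCLike 𝕜] [NormedAddCommGroup E]
    [InnerProductSpace 𝕜 E] {F N : E →L[𝕜] E} (hF : F.IsPositive) (hFN : F ≤ N) :
    ‖F‖ ≤ ‖N‖ := by
  rw [norm_eq_iSup_rayleighQuotient F hF.isSymmetric]
  refine ciSup_le fun x => ?_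
  have hF_nonneg : 0 ≤ F.rayleighQuotient x :=
    div_nonneg (hF.re_inner_nonneg_left x) (by positivity)
  have hF_le : F.rayleighQuotient x ≤ N.rayleighQuotient x := by
    refine div_le_div_of_nonneg_right ?_ (by positivity)
    simpa [reApplyInnerSelf_apply, inner_sub_left] using hFN.re_inner_nonneg_left x
  rw [abs_of_nonneg hF_nonneg]
  exact hF_le.trans ((le_abs_self _).trans (N.rayleighQuotient_le_norm x))

section OneAddCompEq

variable {H : Type*} [NormedAddCommGroup H] [InnerProductSpace ℝ H] {N S F : H →L[ℝ] H}

theorem apply_add_apply_comp_eq_of_one_add_comp_eq (hF : (1 + N ∘L S) ∘L F = N) (x : H) :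
    F x + N (S (F x)) = N x := by
  simpa using congr($hF x)

theorem isPositive_of_one_add_comp_eq (hN : N.IsPositive) (hS : S.IsPositive)
    (hF_sym : F.IsSymmetric) (hF : (1 + N ∘L S) ∘L F = N) : F.IsPositive := by
  refine (isPositive_iff F).2 ⟨hF_sym, fun x => ?_⟩
  set y := F x
  have hy : N (x - S y) = y := by
    rw [map_sub, ← apply_add_apply_comp_eq_of_one_add_comp_eq hF x]
    abel
  calc 0 ≤ ⟪N (x - S y), x - S y⟫ + ⟪S y, y⟫ :=
        add_nonneg (hN.inner_nonneg_left _) (hS.inner_nonneg_left _)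
    _ = ⟪y, x⟫ := by rw [hy, inner_sub_right, real_inner_comm (S y)]; ring

theorem le_of_one_add_comp_eq (hN : N.IsPositive) (hS : S.IsPositive)
    (hF_sym : F.IsSymmetric) (hF : (1 + N ∘L S) ∘L F = N) : F ≤ N := by
  refine (le_def F N).2 ((isPositive_iff _).2 ⟨hN.isSymmetric.sub hF_sym, fun x => ?_⟩)
  set y := F x
  have hNx : N x = y + N (S y) := (apply_add_apply_comp_eq_of_one_add_comp_eq hF x).symm
  calc 0 ≤ ⟪S y, y⟫ + ⟪N (S y), S y⟫ :=
        add_nonneg (hS.inner_nonneg_left _) (hN.inner_nonneg_left _)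
    _ = ⟪(N - F) x, x⟫ := by
      rw [sub_apply, inner_sub_left, real_inner_comm x, hNx, inner_add_right,
        ← hN.inner_left_eq_inner_right, hNx]
      simp only [inner_add_left, real_inner_comm y]
      ring

end OneAddCompEq

theorem norm_adjoint_comp_comp_comp_le {𝕜 E G : Type*} [RCLike 𝕜] [NormedAddCommGroup E]
    [InnerProductSpace 𝕜 E] [CompleteSpace E] [NormedAddCommGroup G] [InnerProductSpace 𝕜 G]
    [CompleteSpace G] (L : E →L[𝕜] G) (X F : G →L[𝕜] G) :
    ‖adjoint L ∘L X ∘L F ∘L X ∘L L‖ ≤ ‖L‖ ^ 2 * ‖X‖ ^ 2 * ‖F‖ :=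
  calc ‖adjoint L ∘L X ∘L F ∘L X ∘L L‖ ≤ ‖adjoint L‖ * (‖X‖ * (‖F‖ * (‖X‖ * ‖L‖))) := by
        grw [opNorm_comp_le, opNorm_comp_le, opNorm_comp_le, opNorm_comp_le]
    _ = ‖L‖ ^ 2 * ‖X‖ ^ 2 * ‖F‖ := by
        rw [LinearIsometryEquiv.norm_map]
        ring

end ContinuousLinearMap

/-- Bound on the quadratic remainder of the perturbed Riccati map:
`‖L* X (I + N(P+X))⁻¹ N X L‖ ≤ ‖L‖² ‖X‖² ‖N‖`. -/
theorem stmt_8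
    {H₁ : Type*} [NormedAddCommGroup H₁] [InnerProductSpace ℝ H₁] [CompleteSpace H₁]
    (L N X P : H₁ →L[ℝ] H₁)
    (hN_sa : IsSelfAdjoint N) (hN_pos : ∀ x, 0 ≤ ⟪N x, x⟫)
    (hX_sa : IsSelfAdjoint X) (hP_sa : IsSelfAdjoint P)
    (hPX_pos : ∀ x, 0 ≤ ⟪(P + X) x, x⟫)
    (h : IsUnit ((1 : H₁ →L[ℝ] H₁) + N ∘L (P + X))) :
    ‖adjoint L ∘L X ∘L Ring.inverse ((1 : H₁ →L[ℝ] H₁) + N ∘L (P + X)) ∘L N ∘L X ∘L L‖ ≤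
      ‖L‖ ^ 2 * ‖X‖ ^ 2 * ‖N‖ := by
  set S := P + X
  have hN : N.IsPositive := (isPositive_iff' N).2 ⟨hN_sa, hN_pos⟩
  have hS : S.IsPositive := (isPositive_iff' S).2 ⟨hP_sa.add hX_sa, hPX_pos⟩
  set F := Ring.inverse (1 + N ∘L S) ∘L N
  have hF_sa : IsSelfAdjoint F := hN_sa.ring_inverse_one_add_mul_mul hS.isSelfAdjoint h
  have hF : (1 + N ∘L S) ∘L F = N := Ring.mul_inverse_cancel_left _ _ h
  have hF_norm : ‖F‖ ≤ ‖N‖ := norm_le_norm_of_isPositive_of_le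
    (isPositive_of_one_add_comp_eq hN hS hF_sa.isSymmetric hF)
    (le_of_one_add_comp_eq hN hS hF_sa.isSymmetric hF)
  exact (norm_adjoint_comp_comp_comp_le L X F).trans (by gcongr)
end

section
/- Let H₁ be a real Hilbert space and E = ℝ^{n_u}. Let A, Ã : H₁ → H₁ and B, B̃ : E → H₁ be bounded, let R : E → E be self-adjoint positive definite, let Q : H₁ → H₁ be bounded self-adjoint, and set N := B R⁻¹ B*, Ñ := B̃ R⁻¹ B̃*, ΔN := Ñ − N. Let P_X be a bounded self-adjoint positive semidefinite operator on H₁ such that I + N P_X and I + Ñ P_X are invertible, and define F(P_X, A, B) := P_X − A* P_X (I + N P_X)⁻¹ A − Q and F(P_X, Ã, B̃) := P_X − Ã* P_X (I + Ñ P_X)⁻¹ Ã − Q. If ‖A − Ã‖ ≤ ε and ‖B − B̃‖ ≤ ε, then ‖F(P_X, Ã, B̃) − F(P_X, A, B)‖ ≤ ‖A‖² ‖P_X‖² ‖ΔN‖ + 2 ‖A‖ ‖P_X‖ ε + ‖P_X‖ ε². -/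
open ContinuousLinearMap
open scoped RealInnerProductSpace

/-!
With `S = P (I + N P)⁻¹` and `S̃ = P (I + Ñ P)⁻¹`, the difference of the two Riccati maps is
`A* S A - Ã* S̃ Ã`. Writing `Ã = A + D` splits it into `A* (S - S̃) A` and three terms containing
`D`, which give `2 ‖A‖ ‖S̃‖ ε + ‖S̃‖ ε²`, while the resolvent identity `S̃ - S = S̃ (N - Ñ) S` gives
`‖S̃ - S‖ ≤ ‖S̃‖ ‖ΔN‖ ‖S‖`. Everything then rests on `‖S‖ ≤ ‖P‖`: for `y = (I + N P)⁻¹ x`,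
positivity of `N` gives `⟪P y, y⟫ ≤ ⟪P y, x⟫ ≤ ‖P y‖ ‖x‖`, and Cauchy–Schwarz for the form
`⟪P ·, ·⟫` gives `‖P y‖² ≤ ‖P‖ ⟪P y, y⟫`.
-/

theorem Ring.mul_inverse_one_add_mul_sub_mul_inverse_one_add_mul {R : Type*} [Ring R]
    {p n n' : R} (h : IsUnit (1 + n' * p)) (h' : IsUnit (1 + n * p)) :
    p * Ring.inverse (1 + n' * p) - p * Ring.inverse (1 + n * p) =
      p * Ring.inverse (1 + n' * p) * (n - n') * (p * Ring.inverse (1 + n * p)) := by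
  rw [← mul_sub, Ring.inverse_sub_inverse (iff_of_true h h')]
  noncomm_ring

section Real

variable {H E : Type*} [NormedAddCommGroup H] [InnerProductSpace ℝ H]
  [NormedAddCommGroup E] [InnerProductSpace ℝ E]

theorem ContinuousLinearMap.isUnit_of_forall_inner_apply_self_pos [FiniteDimensional ℝ E]
    {R : E →L[ℝ] E} (hR : ∀ u, u ≠ 0 → 0 < ⟪R u, u⟫) : IsUnit R := by
  rw [isUnit_iff_isUnit_toLinearMap, LinearMap.isUnit_iff_ker_eq_bot, LinearMap.ker_eq_bot']
  intro u hu
  by_contra h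
  exact (hR u h).ne' (by simp [show R u = 0 from hu])

theorem ContinuousLinearMap.inner_comp_ringInverse_comp_adjoint_apply_self_nonneg
    [CompleteSpace H] [CompleteSpace E] {R : E →L[ℝ] E} (hR : ∀ u, 0 ≤ ⟪R u, u⟫)
    (hRu : IsUnit R) (B : E →L[ℝ] H) (x : H) :
    0 ≤ ⟪(B ∘L Ring.inverse R ∘L adjoint B) x, x⟫ := by
  obtain ⟨u, rfl⟩ := hRu
  rw [Ring.inverse_unit, comp_apply, comp_apply, ← adjoint_inner_right, real_inner_comm]
  generalize adjoint B x = v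
  have h := hR ((↑u⁻¹ : E →L[ℝ] E) v)
  rwa [← mul_apply_eq_comp, u.mul_inv, one_apply_eq_self] at h

theorem ContinuousLinearMap.IsPositive.norm_apply_sq_le {T : H →L[ℝ] H} (hT : T.IsPositive)
    (x : H) : ‖T x‖ ^ 2 ≤ ‖T‖ * ⟪T x, x⟫ := by
  have cs := LinearMap.BilinForm.apply_mul_apply_le_of_forall_zero_le
    ((innerₗ H).comp (T : H →ₗ[ℝ] H)) hT.inner_nonneg_left x (T x)
  simp only [LinearMap.comp_apply, innerₗ_apply_apply, coe_coe] at cs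
  rw [hT.inner_left_eq_inner_right (T x) x, real_inner_self_eq_norm_sq] at cs
  have hTTx : ⟪T (T x), T x⟫ ≤ ‖T‖ * ‖T x‖ ^ 2 :=
    (real_inner_le_norm _ _).trans (by rw [sq, ← mul_assoc]; gcongr; exact T.le_opNorm _)
  rcases (sq_nonneg ‖T x‖).eq_or_lt with h0 | hpos
  · rw [← h0]; exact mul_nonneg (norm_nonneg T) (hT.inner_nonneg_left x)
  · nlinarith [hT.inner_nonneg_left x]

theorem ContinuousLinearMap.IsPositive.norm_comp_ringInverse_one_add_comp_le
    {P : H →L[ℝ] H} (hP : P.IsPositive) {N : H →L[ℝ] H} (hN : ∀ x, 0 ≤ ⟪N x, x⟫)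
    (hu : IsUnit (1 + N ∘L P)) : ‖P ∘L Ring.inverse (1 + N ∘L P)‖ ≤ ‖P‖ := by
  obtain ⟨u, hu⟩ := hu
  rw [← hu, Ring.inverse_unit]
  refine opNorm_le_bound _ (norm_nonneg P) fun x => ?_
  set y := (↑u⁻¹ : H →L[ℝ] H) x
  have hx : x = y + N (P y) := by
    simpa [hu] using congr($(u.mul_inv) x).symm
  have hPy : ⟪P y, y⟫ ≤ ‖P y‖ * ‖x‖ := calc
    ⟪P y, y⟫ ≤ ⟪P y, y⟫ + ⟪N (P y), P y⟫ := le_add_of_nonneg_right (hN _)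
    _ = ⟪P y, x⟫ := by rw [hx, inner_add_right, real_inner_comm (N _)]
    _ ≤ ‖P y‖ * ‖x‖ := real_inner_le_norm _ _
  have hsq := hP.norm_apply_sq_le y
  show ‖P y‖ ≤ ‖P‖ * ‖x‖
  rcases (norm_nonneg (P y)).eq_or_lt with h0 | hpos
  · rw [← h0]; positivity
  · nlinarith [mul_le_mul_of_nonneg_left hPy (norm_nonneg P)]

theorem ContinuousLinearMap.IsPositive.norm_comp_ringInverse_sub_comp_ringInverse_le
    {P : H →L[ℝ] H} (hP : P.IsPositive) {N N' : H →L[ℝ] H} (hN : ∀ x, 0 ≤ ⟪N x, x⟫)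
    (hN' : ∀ x, 0 ≤ ⟪N' x, x⟫) (hu : IsUnit (1 + N ∘L P)) (hu' : IsUnit (1 + N' ∘L P)) :
    ‖P ∘L Ring.inverse (1 + N' ∘L P) - P ∘L Ring.inverse (1 + N ∘L P)‖ ≤
      ‖P‖ ^ 2 * ‖N' - N‖ := calc
  _ = ‖P * Ring.inverse (1 + N' * P) * (N - N') * (P * Ring.inverse (1 + N * P))‖ :=
      congrArg _ (Ring.mul_inverse_one_add_mul_sub_mul_inverse_one_add_mul hu' hu)
  _ ≤ ‖P * Ring.inverse (1 + N' * P)‖ * ‖N - N'‖ * ‖P * Ring.inverse (1 + N * P)‖ :=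
      norm_mul₃_le
  _ ≤ ‖P‖ * ‖N' - N‖ * ‖P‖ := by
      rw [norm_sub_rev]
      gcongr
      exacts [hP.norm_comp_ringInverse_one_add_comp_le hN' hu',
        hP.norm_comp_ringInverse_one_add_comp_le hN hu]
  _ = ‖P‖ ^ 2 * ‖N' - N‖ := by ring

end Real

section RCLike

variable {𝕜 E F : Type*} [RCLike 𝕜] [NormedAddCommGroup E] [InnerProductSpace 𝕜 E]
  [CompleteSpace E] [NormedAddCommGroup F] [InnerProductSpace 𝕜 F] [CompleteSpace F]

theorem ContinuousLinearMap.norm_adjoint_comp_comp_le (A : E →L[𝕜] F) (S : F →L[𝕜] F)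
    (C : E →L[𝕜] F) : ‖adjoint A ∘L S ∘L C‖ ≤ ‖A‖ * ‖S‖ * ‖C‖ := calc
  _ ≤ ‖adjoint A‖ * (‖S‖ * ‖C‖) :=
      (opNorm_comp_le _ _).trans (by gcongr; exact opNorm_comp_le _ _)
  _ = ‖A‖ * ‖S‖ * ‖C‖ := by rw [adjoint.norm_map, mul_assoc]

theorem ContinuousLinearMap.norm_adjoint_conj_sub_adjoint_conj_le {A A' : E →L[𝕜] F}
    {S S' : F →L[𝕜] F} {s ε : ℝ} (hS' : ‖S'‖ ≤ s) (hA : ‖A - A'‖ ≤ ε) :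
    ‖adjoint A' ∘L S' ∘L A' - adjoint A ∘L S ∘L A‖ ≤
      ‖A‖ ^ 2 * ‖S' - S‖ + 2 * ‖A‖ * s * ε + s * ε ^ 2 := by
  obtain ⟨D, rfl⟩ : ∃ D, A' = A + D := ⟨A' - A, by abel⟩
  rw [sub_add_cancel_left, norm_neg] at hA
  have hs : 0 ≤ s := (norm_nonneg _).trans hS'
  have hε : 0 ≤ ε := (norm_nonneg _).trans hA
  have expand : adjoint (A + D) ∘L S' ∘L (A + D) - adjoint A ∘L S ∘L A =
      adjoint A ∘L (S' - S) ∘L A + adjoint D ∘L S' ∘L A + adjoint A ∘L S' ∘L D +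
        adjoint D ∘L S' ∘L D := by
    simp only [map_add, add_comp, comp_add, comp_sub, sub_comp]
    abel
  rw [expand]
  calc _ ≤ ‖A‖ * ‖S' - S‖ * ‖A‖ + ‖D‖ * ‖S'‖ * ‖A‖ + ‖A‖ * ‖S'‖ * ‖D‖ +
        ‖D‖ * ‖S'‖ * ‖D‖ := by
        refine norm_add₄_le.trans ?_
        gcongr <;> exact norm_adjoint_comp_comp_le _ _ _
    _ ≤ ‖A‖ * ‖S' - S‖ * ‖A‖ + ε * s * ‖A‖ + ‖A‖ * s * ε + ε * s * ε := by gcongr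
    _ = _ := by ring

end RCLike

theorem stmt_9_general
    {H₁ : Type*} [NormedAddCommGroup H₁] [InnerProductSpace ℝ H₁] [CompleteSpace H₁]
    {n : ℕ}
    (A A' : H₁ →L[ℝ] H₁)
    (B B' : EuclideanSpace ℝ (Fin n) →L[ℝ] H₁)
    (R : EuclideanSpace ℝ (Fin n) →L[ℝ] EuclideanSpace ℝ (Fin n))
    (hR_pos : ∀ u, u ≠ 0 → 0 < ⟪R u, u⟫)
    (Q : H₁ →L[ℝ] H₁)
    (N N' : H₁ →L[ℝ] H₁)
    (hN : N = B ∘L Ring.inverse R ∘L adjoint B)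
    (hN' : N' = B' ∘L Ring.inverse R ∘L adjoint B')
    (PX : H₁ →L[ℝ] H₁) (hPX_sa : IsSelfAdjoint PX) (hPX_pos : ∀ x, 0 ≤ ⟪PX x, x⟫)
    (h1 : IsUnit ((1 : H₁ →L[ℝ] H₁) + N ∘L PX))
    (h2 : IsUnit ((1 : H₁ →L[ℝ] H₁) + N' ∘L PX))
    (ε : ℝ) (hA : ‖A - A'‖ ≤ ε) :
    ‖(PX - adjoint A' ∘L PX ∘L Ring.inverse ((1 : H₁ →L[ℝ] H₁) + N' ∘L PX) ∘L A' - Q)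
        - (PX - adjoint A ∘L PX ∘L Ring.inverse ((1 : H₁ →L[ℝ] H₁) + N ∘L PX) ∘L A - Q)‖ ≤
      ‖A‖ ^ 2 * ‖PX‖ ^ 2 * ‖N' - N‖ + 2 * ‖A‖ * ‖PX‖ * ε + ‖PX‖ * ε ^ 2 := by
  have hR : IsUnit R := isUnit_of_forall_inner_apply_self_pos hR_pos
  have hR_nonneg : ∀ u, 0 ≤ ⟪R u, u⟫ := fun u =>
    (eq_or_ne u 0).elim (fun h => by simp [h]) fun h => (hR_pos u h).le
  have hN_nonneg : ∀ x, 0 ≤ ⟪N x, x⟫ :=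
    hN ▸ inner_comp_ringInverse_comp_adjoint_apply_self_nonneg hR_nonneg hR B
  have hN'_nonneg : ∀ x, 0 ≤ ⟪N' x, x⟫ :=
    hN' ▸ inner_comp_ringInverse_comp_adjoint_apply_self_nonneg hR_nonneg hR B'
  have hP : PX.IsPositive := (isPositive_iff' PX).2 ⟨hPX_sa, hPX_pos⟩
  rw [sub_sub_sub_cancel_right, sub_sub_sub_cancel_left, norm_sub_rev, mul_assoc (‖A‖ ^ 2)]
  calc _ ≤ ‖A‖ ^ 2 * ‖PX ∘L Ring.inverse (1 + N' ∘L PX) - PX ∘L Ring.inverse (1 + N ∘L PX)‖ +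
        2 * ‖A‖ * ‖PX‖ * ε + ‖PX‖ * ε ^ 2 :=
      norm_adjoint_conj_sub_adjoint_conj_le
        (hP.norm_comp_ringInverse_one_add_comp_le hN'_nonneg h2) hA
    _ ≤ _ := by
      gcongr
      exact hP.norm_comp_ringInverse_sub_comp_ringInverse_le hN_nonneg hN'_nonneg h1 h2

/-- Perturbation bound for the discrete algebraic Riccati map when the dynamics `(A, B)`
are replaced by `(Ã, B̃)`. -/
theorem stmt_9
    {H₁ : Type*} [NormedAddCommGroup H₁] [InnerProductSpace ℝ H₁] [CompleteSpace H₁]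
    {n : ℕ}
    (A A' : H₁ →L[ℝ] H₁)
    (B B' : EuclideanSpace ℝ (Fin n) →L[ℝ] H₁)
    (R : EuclideanSpace ℝ (Fin n) →L[ℝ] EuclideanSpace ℝ (Fin n))
    (hR_sa : IsSelfAdjoint R) (hR_pos : ∀ u, u ≠ 0 → 0 < ⟪R u, u⟫)
    (Q : H₁ →L[ℝ] H₁) (hQ_sa : IsSelfAdjoint Q)
    (N N' : H₁ →L[ℝ] H₁)
    (hN : N = B ∘L Ring.inverse R ∘L adjoint B)
    (hN' : N' = B' ∘L Ring.inverse R ∘L adjoint B')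
    (PX : H₁ →L[ℝ] H₁) (hPX_sa : IsSelfAdjoint PX) (hPX_pos : ∀ x, 0 ≤ ⟪PX x, x⟫)
    (h1 : IsUnit ((1 : H₁ →L[ℝ] H₁) + N ∘L PX))
    (h2 : IsUnit ((1 : H₁ →L[ℝ] H₁) + N' ∘L PX))
    (ε : ℝ) (hA : ‖A - A'‖ ≤ ε) (hB : ‖B - B'‖ ≤ ε) :
    ‖(PX - adjoint A' ∘L PX ∘L Ring.inverse ((1 : H₁ →L[ℝ] H₁) + N' ∘L PX) ∘L A' - Q)
        - (PX - adjoint A ∘L PX ∘L Ring.inverse ((1 : H₁ →L[ℝ] H₁) + N ∘L PX) ∘L A - Q)‖ ≤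
      ‖A‖ ^ 2 * ‖PX‖ ^ 2 * ‖N' - N‖ + 2 * ‖A‖ * ‖PX‖ * ε + ‖PX‖ * ε ^ 2 :=
  stmt_9_general A A' B B' R hR_pos Q N N' hN hN' PX hPX_sa hPX_pos h1 h2 ε hA
end

section
/- Let H₁ be a real Hilbert space and E = ℝ^{n_u}. For i = 1, 2, let A_i : H₁ → H₁ and B_i : E → H₁ be bounded linear operators and P_i : H₁ → H₁ bounded self-adjoint positive semidefinite, and let R : E → E be self-adjoint with ⟨u, R u⟩ ≥ μ ‖u‖² for all u ∈ E, for some μ > 0. Define K_i := −(R + B_i* P_i B_i)⁻¹ B_i* P_i A_i and Γ := 1 + max{‖A₁‖, ‖B₁‖, ‖P₁‖, ‖K₁‖}. If ‖A₁ − A₂‖ ≤ ε, ‖B₁ − B₂‖ ≤ ε, ‖P₁ − P₂‖ ≤ ε and ε ∈ [0, 1), then ‖K₁ − K₂‖ ≤ 3 ε Γ³ / μ. -/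
open ContinuousLinearMap
open scoped RealInnerProductSpace

/-! The gains satisfy the stationarity equations `Sᵢ Kᵢ + Bᵢ* Pᵢ Aᵢ = 0` with
`Sᵢ = R + Bᵢ* Pᵢ Bᵢ`. Subtracting them at the common point `K₁` gives
`S₂ (K₁ - K₂) = B₂* P₂ (A₂ + B₂ K₁) - B₁* P₁ (A₁ + B₁ K₁)`, a difference of triple products
whose corresponding factors differ by `O(ε)`, so telescoping bounds it by `3 ε Γ³`. Since `P₂ ≥ 0`, the
operator `S₂` inherits the coercivity constant `μ` of `R`, so `‖S₂ u‖ ≥ μ ‖u‖` and dividing by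
`μ` bounds `K₁ - K₂`. -/

section Coercive

variable {F G : Type*} [NormedAddCommGroup F] [InnerProductSpace ℝ F]
  [NormedAddCommGroup G] [InnerProductSpace ℝ G]

lemma mul_norm_le_norm_apply_of_coercive {S : F →L[ℝ] F} {μ : ℝ}
    (hS : ∀ u, μ * ‖u‖ ^ 2 ≤ ⟪u, S u⟫) (u : F) : μ * ‖u‖ ≤ ‖S u‖ := by
  rcases (norm_nonneg u).eq_or_lt with hu | hu
  · simp [← hu]
  · refine le_of_mul_le_mul_right ?_ hu
    calc μ * ‖u‖ * ‖u‖ = μ * ‖u‖ ^ 2 := by ring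
      _ ≤ ⟪u, S u⟫ := hS u
      _ ≤ ‖u‖ * ‖S u‖ := real_inner_le_norm u (S u)
      _ = ‖S u‖ * ‖u‖ := mul_comm _ _

lemma opNorm_le_opNorm_comp_div_of_coercive {S : F →L[ℝ] F} {μ : ℝ} (hμ : 0 < μ)
    (hS : ∀ u, μ * ‖u‖ ^ 2 ≤ ⟪u, S u⟫) (T : G →L[ℝ] F) : ‖T‖ ≤ ‖S ∘L T‖ / μ := by
  refine opNorm_le_bound _ (by positivity) fun z => ?_
  rw [div_mul_eq_mul_div, le_div_iff₀ hμ, mul_comm]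
  exact (mul_norm_le_norm_apply_of_coercive hS (T z)).trans (le_opNorm (S ∘L T) z)

lemma isUnit_of_coercive [FiniteDimensional ℝ F] {S : F →L[ℝ] F} {μ : ℝ} (hμ : 0 < μ)
    (hS : ∀ u, μ * ‖u‖ ^ 2 ≤ ⟪u, S u⟫) : IsUnit S := by
  have hinj : Function.Injective S := by
    refine (injective_iff_map_eq_zero S).mpr fun u hu => norm_eq_zero.mp ?_
    have := mul_norm_le_norm_apply_of_coercive hS u
    rw [hu, norm_zero] at this
    exact le_antisymm (nonpos_of_mul_nonpos_right this hμ) (norm_nonneg u)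
  exact isUnit_iff_bijective.mpr
    ⟨hinj, LinearMap.injective_iff_surjective (f := (S : F →ₗ[ℝ] F)).mp hinj⟩

lemma coercive_add_adjoint_comp_comp [CompleteSpace F] [CompleteSpace G]
    {R : F →L[ℝ] F} {μ : ℝ} (hR : ∀ u, μ * ‖u‖ ^ 2 ≤ ⟪u, R u⟫)
    {P : G →L[ℝ] G} (hP : ∀ x, 0 ≤ ⟪P x, x⟫) (B : F →L[ℝ] G) (u : F) :
    μ * ‖u‖ ^ 2 ≤ ⟪u, (R + adjoint B ∘L P ∘L B) u⟫ := by
  have hexpand : ⟪u, (R + adjoint B ∘L P ∘L B) u⟫ = ⟪u, R u⟫ + ⟪P (B u), B u⟫ := by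
    rw [add_apply, inner_add_right, comp_apply, comp_apply, adjoint_inner_right,
      real_inner_comm (P (B u))]
  linarith [hR u, hP (B u)]

end Coercive

section Perturbation

variable {𝕜 : Type*} [NontriviallyNormedField 𝕜]
  {E F G H : Type*} [SeminormedAddCommGroup E] [NormedSpace 𝕜 E] [SeminormedAddCommGroup F]
  [NormedSpace 𝕜 F] [SeminormedAddCommGroup G] [NormedSpace 𝕜 G] [SeminormedAddCommGroup H]
  [NormedSpace 𝕜 H]

lemma norm_add_comp_le (A : F →L[𝕜] G) (B : E →L[𝕜] G) (K : F →L[𝕜] E) :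
    ‖A + B ∘L K‖ ≤ ‖A‖ + ‖B‖ * ‖K‖ :=
  (norm_add_le _ _).trans (by gcongr; exact opNorm_comp_le B K)

lemma norm_comp_comp_sub_comp_comp_le (c₁ c₂ : G →L[𝕜] H) (p₁ p₂ : F →L[𝕜] G)
    (m₁ m₂ : E →L[𝕜] F) :
    ‖c₂ ∘L p₂ ∘L m₂ - c₁ ∘L p₁ ∘L m₁‖
      ≤ ‖c₂ - c₁‖ * ‖p₂‖ * ‖m₂‖ + ‖c₁‖ * ‖p₂ - p₁‖ * ‖m₂‖ + ‖c₁‖ * ‖p₁‖ * ‖m₂ - m₁‖ := by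
  have htelescope : c₂ ∘L p₂ ∘L m₂ - c₁ ∘L p₁ ∘L m₁
      = (c₂ - c₁) ∘L p₂ ∘L m₂ + c₁ ∘L (p₂ - p₁) ∘L m₂ + c₁ ∘L p₁ ∘L (m₂ - m₁) := by
    simp only [sub_comp, comp_sub]
    abel
  rw [htelescope]
  refine norm_add₃_le.trans (add_le_add_three ?_ ?_ ?_) <;>
    exact (opNorm_comp_le _ _).trans (by rw [mul_assoc]; gcongr; exact opNorm_comp_le _ _)

lemma comp_neg_inverse_comp_add_eq_zero (S : F →L[𝕜] F) (hS : IsUnit S) (X : E →L[𝕜] F) :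
    S ∘L (-(Ring.inverse S ∘L X)) + X = 0 := by
  rw [comp_neg, ← comp_assoc, ← mul_def, Ring.mul_inverse_cancel S hS, one_def, id_comp,
    neg_add_cancel]

end Perturbation

section Gain

variable {F G : Type*} [NormedAddCommGroup F] [InnerProductSpace ℝ F] [CompleteSpace F]
  [NormedAddCommGroup G] [InnerProductSpace ℝ G] [CompleteSpace G]

lemma add_comp_comp_comp_add (R : F →L[ℝ] F) (B : F →L[ℝ] G) (P A : G →L[ℝ] G)
    (K : G →L[ℝ] F) :
    (R + adjoint B ∘L P ∘L B) ∘L K + adjoint B ∘L P ∘L A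
      = R ∘L K + adjoint B ∘L P ∘L (A + B ∘L K) := by
  simp only [add_comp, comp_add, comp_assoc]
  abel

lemma add_adjoint_comp_comp_comp_sub_eq (R : F →L[ℝ] F) (A₁ A₂ P₁ P₂ : G →L[ℝ] G)
    (B₁ B₂ : F →L[ℝ] G) (K₁ K₂ : G →L[ℝ] F)
    (hK₁ : (R + adjoint B₁ ∘L P₁ ∘L B₁) ∘L K₁ + adjoint B₁ ∘L P₁ ∘L A₁ = 0)
    (hK₂ : (R + adjoint B₂ ∘L P₂ ∘L B₂) ∘L K₂ + adjoint B₂ ∘L P₂ ∘L A₂ = 0) :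
    (R + adjoint B₂ ∘L P₂ ∘L B₂) ∘L (K₁ - K₂)
      = adjoint B₂ ∘L P₂ ∘L (A₂ + B₂ ∘L K₁) - adjoint B₁ ∘L P₁ ∘L (A₁ + B₁ ∘L K₁) := by
  calc _ = ((R + adjoint B₂ ∘L P₂ ∘L B₂) ∘L K₁ + adjoint B₂ ∘L P₂ ∘L A₂)
          - ((R + adjoint B₂ ∘L P₂ ∘L B₂) ∘L K₂ + adjoint B₂ ∘L P₂ ∘L A₂) := by
        rw [comp_sub]; abel
    _ = ((R + adjoint B₂ ∘L P₂ ∘L B₂) ∘L K₁ + adjoint B₂ ∘L P₂ ∘L A₂)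
          - ((R + adjoint B₁ ∘L P₁ ∘L B₁) ∘L K₁ + adjoint B₁ ∘L P₁ ∘L A₁) := by rw [hK₁, hK₂]
    _ = _ := by rw [add_comp_comp_comp_add, add_comp_comp_comp_add, add_sub_add_left_eq_sub]

lemma norm_adjoint_comp_comp_add_sub_le (A₁ A₂ P₁ P₂ : G →L[ℝ] G) (B₁ B₂ : F →L[ℝ] G)
    (K : G →L[ℝ] F) {Γ ε : ℝ} (hA₁ : ‖A₁‖ ≤ Γ - 1) (hB₁ : ‖B₁‖ ≤ Γ - 1) (hP₁ : ‖P₁‖ ≤ Γ - 1)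
    (hK : ‖K‖ ≤ Γ - 1) (hε1 : ε < 1)
    (hA : ‖A₁ - A₂‖ ≤ ε) (hB : ‖B₁ - B₂‖ ≤ ε) (hP : ‖P₁ - P₂‖ ≤ ε) :
    ‖adjoint B₂ ∘L P₂ ∘L (A₂ + B₂ ∘L K) - adjoint B₁ ∘L P₁ ∘L (A₁ + B₁ ∘L K)‖
      ≤ 3 * ε * Γ ^ 3 := by
  have hε0 : 0 ≤ ε := (norm_nonneg _).trans hA
  have hΓ1 : 0 ≤ Γ - 1 := (norm_nonneg _).trans hA₁
  have hP₂ : ‖P₂‖ ≤ Γ := by linarith [norm_le_norm_add_norm_sub P₁ P₂]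
  have hA₂ : ‖A₂‖ ≤ Γ := by linarith [norm_le_norm_add_norm_sub A₁ A₂]
  have hB₂ : ‖B₂‖ ≤ Γ := by linarith [norm_le_norm_add_norm_sub B₁ B₂]
  have hadj : ‖adjoint B₂ - adjoint B₁‖ ≤ ε := by
    rwa [← map_sub, LinearIsometryEquiv.norm_map, norm_sub_rev]
  have hM : ‖A₂ + B₂ ∘L K‖ ≤ Γ ^ 2 :=
    (norm_add_comp_le A₂ B₂ K).trans (by nlinarith [norm_nonneg B₂, norm_nonneg K])
  have hdM : ‖A₂ + B₂ ∘L K - (A₁ + B₁ ∘L K)‖ ≤ ε * Γ := by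
    rw [add_sub_add_comm, ← sub_comp]
    refine (norm_add_comp_le _ _ K).trans ?_
    rw [norm_sub_rev A₂, norm_sub_rev B₂]
    nlinarith [norm_nonneg (B₁ - B₂), norm_nonneg K]
  calc _ ≤ ε * Γ * Γ ^ 2 + (Γ - 1) * ε * Γ ^ 2 + (Γ - 1) * (Γ - 1) * (ε * Γ) := by
        refine (norm_comp_comp_sub_comp_comp_le _ _ _ _ _ _).trans ?_
        rw [LinearIsometryEquiv.norm_map, norm_sub_rev P₂]
        gcongr
        exact mul_nonneg hε0 (by linarith)
    _ ≤ 3 * ε * Γ ^ 3 := by nlinarith [mul_nonneg hε0 hΓ1, mul_nonneg (mul_nonneg hε0 hΓ1) hΓ1]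

end Gain

theorem stmt_16_general
    {H₁ : Type*} [NormedAddCommGroup H₁] [InnerProductSpace ℝ H₁] [CompleteSpace H₁]
    {n : ℕ}
    (A₁ A₂ : H₁ →L[ℝ] H₁)
    (B₁ B₂ : EuclideanSpace ℝ (Fin n) →L[ℝ] H₁)
    (P₁ P₂ : H₁ →L[ℝ] H₁)
    (hP₁_pos : ∀ x, 0 ≤ ⟪P₁ x, x⟫)
    (hP₂_pos : ∀ x, 0 ≤ ⟪P₂ x, x⟫)
    (R : EuclideanSpace ℝ (Fin n) →L[ℝ] EuclideanSpace ℝ (Fin n))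
    (μ : ℝ) (hμ : 0 < μ) (hR : ∀ u, μ * ‖u‖ ^ 2 ≤ ⟪u, R u⟫)
    (K₁ K₂ : H₁ →L[ℝ] EuclideanSpace ℝ (Fin n))
    (hK₁ : K₁ = -(Ring.inverse (R + adjoint B₁ ∘L P₁ ∘L B₁) ∘L adjoint B₁ ∘L P₁ ∘L A₁))
    (hK₂ : K₂ = -(Ring.inverse (R + adjoint B₂ ∘L P₂ ∘L B₂) ∘L adjoint B₂ ∘L P₂ ∘L A₂))
    (Γ : ℝ) (hΓ : Γ = 1 + max (max ‖A₁‖ ‖B₁‖) (max ‖P₁‖ ‖K₁‖))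
    (ε : ℝ) (hε1 : ε < 1)
    (hA : ‖A₁ - A₂‖ ≤ ε) (hB : ‖B₁ - B₂‖ ≤ ε) (hP : ‖P₁ - P₂‖ ≤ ε) :
    ‖K₁ - K₂‖ ≤ 3 * ε * Γ ^ 3 / μ := by
  have hS₁ := coercive_add_adjoint_comp_comp hR hP₁_pos B₁
  have hS₂ := coercive_add_adjoint_comp_comp hR hP₂_pos B₂
  have hstat₁ := comp_neg_inverse_comp_add_eq_zero _ (isUnit_of_coercive hμ hS₁)
    (adjoint B₁ ∘L P₁ ∘L A₁)
  have hstat₂ := comp_neg_inverse_comp_add_eq_zero _ (isUnit_of_coercive hμ hS₂)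
    (adjoint B₂ ∘L P₂ ∘L A₂)
  rw [← hK₁] at hstat₁
  rw [← hK₂] at hstat₂
  have hΓ_le : ∀ {x : ℝ}, x ≤ max (max ‖A₁‖ ‖B₁‖) (max ‖P₁‖ ‖K₁‖) → x ≤ Γ - 1 := by
    intro x hx; linarith
  calc ‖K₁ - K₂‖ ≤ ‖(R + adjoint B₂ ∘L P₂ ∘L B₂) ∘L (K₁ - K₂)‖ / μ :=
        opNorm_le_opNorm_comp_div_of_coercive hμ hS₂ _
    _ = ‖adjoint B₂ ∘L P₂ ∘L (A₂ + B₂ ∘L K₁) - adjoint B₁ ∘L P₁ ∘L (A₁ + B₁ ∘L K₁)‖ / μ := by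
        rw [add_adjoint_comp_comp_comp_sub_eq R A₁ A₂ P₁ P₂ B₁ B₂ K₁ K₂ hstat₁ hstat₂]
    _ ≤ 3 * ε * Γ ^ 3 / μ := by
        gcongr
        exact norm_adjoint_comp_comp_add_sub_le A₁ A₂ P₁ P₂ B₁ B₂ K₁
          (hΓ_le (by simp)) (hΓ_le (by simp)) (hΓ_le (by simp)) (hΓ_le (by simp)) hε1 hA hB hP

/-- Perturbation bound for the Riccati gains: `‖K₁ - K₂‖ ≤ 3 ε Γ³ / μ`. -/
theorem stmt_16
    {H₁ : Type*} [NormedAddCommGroup H₁] [InnerProductSpace ℝ H₁] [CompleteSpace H₁]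
    {n : ℕ}
    (A₁ A₂ : H₁ →L[ℝ] H₁)
    (B₁ B₂ : EuclideanSpace ℝ (Fin n) →L[ℝ] H₁)
    (P₁ P₂ : H₁ →L[ℝ] H₁)
    (hP₁_sa : IsSelfAdjoint P₁) (hP₁_pos : ∀ x, 0 ≤ ⟪P₁ x, x⟫)
    (hP₂_sa : IsSelfAdjoint P₂) (hP₂_pos : ∀ x, 0 ≤ ⟪P₂ x, x⟫)
    (R : EuclideanSpace ℝ (Fin n) →L[ℝ] EuclideanSpace ℝ (Fin n))
    (hR_sa : IsSelfAdjoint R)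
    (μ : ℝ) (hμ : 0 < μ) (hR : ∀ u, μ * ‖u‖ ^ 2 ≤ ⟪u, R u⟫)
    (K₁ K₂ : H₁ →L[ℝ] EuclideanSpace ℝ (Fin n))
    (hK₁ : K₁ = -(Ring.inverse (R + adjoint B₁ ∘L P₁ ∘L B₁) ∘L adjoint B₁ ∘L P₁ ∘L A₁))
    (hK₂ : K₂ = -(Ring.inverse (R + adjoint B₂ ∘L P₂ ∘L B₂) ∘L adjoint B₂ ∘L P₂ ∘L A₂))
    (Γ : ℝ) (hΓ : Γ = 1 + max (max ‖A₁‖ ‖B₁‖) (max ‖P₁‖ ‖K₁‖))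
    (ε : ℝ) (hε0 : 0 ≤ ε) (hε1 : ε < 1)
    (hA : ‖A₁ - A₂‖ ≤ ε) (hB : ‖B₁ - B₂‖ ≤ ε) (hP : ‖P₁ - P₂‖ ≤ ε) :
    ‖K₁ - K₂‖ ≤ 3 * ε * Γ ^ 3 / μ :=
  stmt_16_general A₁ A₂ B₁ B₂ P₁ P₂ hP₁_pos hP₂_pos R μ hμ hR K₁ K₂ hK₁ hK₂ Γ hΓ ε hε1 hA hB hP
end

section
/- Let H₁ be a real Hilbert space and E = ℝ^{n_u}. Let A : H₁ → H₁, B : E → H₁, and K, K̃ : H₁ → E be bounded linear operators. Let L := A + B K, let ρ ∈ (0, 1) satisfy ρ(L) ≤ ρ where ρ(L) is the spectral radius, and suppose τ(L, ρ) := sup_{k≥0} ‖L^k‖ ρ^{-k} is finite. If ‖K̃ − K‖ ≤ (1 − ρ)/(2 τ(L, ρ) ‖B‖), then for every k ≥ 0: ‖(A + B K̃)^k‖ ≤ τ(L, ρ) ((1 + ρ)/2)^k; equivalently, τ(A + B K̃, (1 + ρ)/2) ≤ τ(L, ρ). -/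
/-!
Write `A + B K' = L + Δ` with `Δ = B (K' - K)`. If `‖L ^ k‖ ≤ τ ρ ^ k` for all `k`, expanding
`(L + Δ) ^ k` one factor at a time gives `‖(L + Δ) ^ k‖ ≤ τ (ρ + τ ‖Δ‖) ^ k`, and the bound on
`‖K' - K‖` is exactly what makes `ρ + τ ‖Δ‖ ≤ (1 + ρ) / 2`.
-/

open ContinuousLinearMap

-- Generalized over `m` so that the induction on `k` can use
-- `x ^ m * (x + y) ^ (k + 1) = x ^ (m + 1) * (x + y) ^ k + x ^ m * y * (x + y) ^ k`.
theorem norm_pow_mul_add_pow_le {R : Type*} [SeminormedRing R] {x y : R} {τ ρ : ℝ}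
    (hx : ∀ k : ℕ, ‖x ^ k‖ ≤ τ * ρ ^ k) (k m : ℕ) :
    ‖x ^ m * (x + y) ^ k‖ ≤ τ * ρ ^ m * (ρ + τ * ‖y‖) ^ k := by
  induction k generalizing m with
  | zero => simpa using hx m
  | succ k ih =>
    have hsplit : x ^ m * (x + y) ^ (k + 1) =
        x ^ (m + 1) * (x + y) ^ k + x ^ m * y * (x + y) ^ k := by
      rw [pow_succ' (x + y), pow_succ, ← mul_assoc, mul_add, add_mul]
    have hy :
        ‖x ^ m * y * (x + y) ^ k‖ ≤ τ * ρ ^ m * (‖y‖ * (τ * (ρ + τ * ‖y‖) ^ k)) := by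
      have hk : ‖(x + y) ^ k‖ ≤ τ * (ρ + τ * ‖y‖) ^ k := by simpa using ih 0
      calc ‖x ^ m * y * (x + y) ^ k‖ ≤ ‖x ^ m‖ * (‖y‖ * ‖(x + y) ^ k‖) := by
            rw [mul_assoc]; exact (norm_mul_le _ _).trans (by gcongr; exact norm_mul_le _ _)
        _ ≤ _ := mul_le_mul (hx m) (by gcongr) (by positivity) ((norm_nonneg _).trans (hx m))
    calc ‖x ^ m * (x + y) ^ (k + 1)‖
        ≤ τ * ρ ^ (m + 1) * (ρ + τ * ‖y‖) ^ k
            + τ * ρ ^ m * (‖y‖ * (τ * (ρ + τ * ‖y‖) ^ k)) := by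
          rw [hsplit]; exact (norm_add_le _ _).trans (add_le_add (ih (m + 1)) hy)
      _ = τ * ρ ^ m * (ρ + τ * ‖y‖) ^ (k + 1) := by ring

theorem norm_add_pow_le {R : Type*} [SeminormedRing R] {x y : R} {τ ρ : ℝ}
    (hx : ∀ k : ℕ, ‖x ^ k‖ ≤ τ * ρ ^ k) (k : ℕ) :
    ‖(x + y) ^ k‖ ≤ τ * (ρ + τ * ‖y‖) ^ k := by
  simpa using norm_pow_mul_add_pow_le hx k 0

theorem le_iSup_div_pow_mul_pow {f : ℕ → ℝ} {ρ : ℝ} (hρ : 0 < ρ)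
    (hf : BddAbove (Set.range fun k => f k / ρ ^ k)) (k : ℕ) :
    f k ≤ (⨆ j, f j / ρ ^ j) * ρ ^ k := by
  rw [← div_le_iff₀ (pow_pos hρ k)]
  exact le_ciSup hf k

-- For `c = 0` the left side is `0`, by the convention `a / 0 = 0`.
theorem mul_div_two_mul_le (c : ℝ) {a : ℝ} (ha : 0 ≤ a) : c * (a / (2 * c)) ≤ a / 2 := by
  rcases eq_or_ne c 0 with rfl | hc
  · rw [zero_mul]; positivity
  · rw [mul_div_left_comm, div_mul_cancel_right₀ hc, div_eq_mul_inv]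

theorem stmt_17_general
    {H₁ : Type*} [NormedAddCommGroup H₁] [InnerProductSpace ℝ H₁]
    {n : ℕ}
    (A : H₁ →L[ℝ] H₁) (B : EuclideanSpace ℝ (Fin n) →L[ℝ] H₁)
    (K K' : H₁ →L[ℝ] EuclideanSpace ℝ (Fin n))
    (L : H₁ →L[ℝ] H₁) (hL : L = A + B ∘L K)
    (ρ : ℝ) (hρ : ρ ∈ Set.Ioo (0 : ℝ) 1)
    (hbdd : BddAbove (Set.range fun k : ℕ => ‖L ^ k‖ / ρ ^ k))
    (τ : ℝ) (hτ : τ = ⨆ k : ℕ, ‖L ^ k‖ / ρ ^ k)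
    (hK : ‖K' - K‖ ≤ (1 - ρ) / (2 * τ * ‖B‖)) :
    ∀ k : ℕ, ‖(A + B ∘L K') ^ k‖ ≤ τ * ((1 + ρ) / 2) ^ k := by
  obtain ⟨hρ0, hρ1⟩ := hρ
  have hL_pow : ∀ k : ℕ, ‖L ^ k‖ ≤ τ * ρ ^ k := hτ ▸ le_iSup_div_pow_mul_pow hρ0 hbdd
  have hτ0 : 0 ≤ τ := by simpa using (norm_nonneg _).trans (hL_pow 0)
  have hsplit : A + B ∘L K' = L + B ∘L (K' - K) := by
    rw [hL, comp_sub]; abel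
  have hsmall : τ * ‖B ∘L (K' - K)‖ ≤ (1 - ρ) / 2 :=
    calc τ * ‖B ∘L (K' - K)‖ ≤ τ * ‖B‖ * ‖K' - K‖ := by
          rw [mul_assoc]; gcongr; exact opNorm_comp_le _ _
      _ ≤ τ * ‖B‖ * ((1 - ρ) / (2 * (τ * ‖B‖))) := by rw [← mul_assoc]; gcongr
      _ ≤ (1 - ρ) / 2 := mul_div_two_mul_le _ (by linarith)
  intro k
  rw [hsplit]
  calc ‖(L + B ∘L (K' - K)) ^ k‖ ≤ τ * (ρ + τ * ‖B ∘L (K' - K)‖) ^ k :=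
        norm_add_pow_le hL_pow k
    _ ≤ τ * ((1 + ρ) / 2) ^ k := by gcongr; linarith

/-- A gain `K̃` close enough to the stabilizing gain `K` still stabilizes the closed loop:
`‖(A + B K̃)^k‖ ≤ τ(L, ρ) ((1 + ρ)/2)^k` for all `k`. -/
theorem stmt_17
    {H₁ : Type*} [NormedAddCommGroup H₁] [InnerProductSpace ℝ H₁] [CompleteSpace H₁]
    {n : ℕ}
    (A : H₁ →L[ℝ] H₁) (B : EuclideanSpace ℝ (Fin n) →L[ℝ] H₁)
    (K K' : H₁ →L[ℝ] EuclideanSpace ℝ (Fin n))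
    (L : H₁ →L[ℝ] H₁) (hL : L = A + B ∘L K)
    (ρ : ℝ) (hρ : ρ ∈ Set.Ioo (0 : ℝ) 1)
    (hspec : spectralRadius ℝ L ≤ ENNReal.ofReal ρ)
    (hbdd : BddAbove (Set.range fun k : ℕ => ‖L ^ k‖ / ρ ^ k))
    (τ : ℝ) (hτ : τ = ⨆ k : ℕ, ‖L ^ k‖ / ρ ^ k)
    (hK : ‖K' - K‖ ≤ (1 - ρ) / (2 * τ * ‖B‖)) :
    ∀ k : ℕ, ‖(A + B ∘L K') ^ k‖ ≤ τ * ((1 + ρ) / 2) ^ k :=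
  stmt_17_general A B K K' L hL ρ hρ hbdd τ hτ hK
end
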